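/- uniq is NOT embarrassingly parallel in general, but uniq composed after uniq-aggregation is correct: for lists l₁, l₂, uniq(uniq(l₁) ++ uniq(l₂)) = uniq(l₁ ++ l₂), where uniq removes adjacent duplicates. -/
import Mathlib

open List

private lemma destutter'_head {α : Type*} [DecidableEq α] (l : List α) (a : α) :
    ∃ t, destutter' (· ≠ ·) a l = a :: t := by
  induction l generalizing a with
  | nil => exact ⟨[], rfl⟩
  | cons b l ih =>
    by_cases h : a ≠ b
    · exact ⟨_, destutter'_cons_pos _ h⟩
    · rw [destutter'_cons_neg _ h]; exact ih a

/-- Key lemma: destutter' of a destutter'. -/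
private lemma destutter'_destutter' {α : Type*} [DecidableEq α] (l : List α) (a b : α) :
    destutter' (· ≠ ·) a (destutter' (· ≠ ·) b l)
      = if a ≠ b then a :: destutter' (· ≠ ·) b l else destutter' (· ≠ ·) b l := by
  induction l generalizing a b with
  | nil =>
    simp only [destutter'_nil, destutter'_singleton]
    split
    · rfl
    · next h => simp at h; subst h; rfl
  | cons c t ih =>
    by_cases hbc : b ≠ c
    · rw [destutter'_cons_pos _ hbc]
      by_cases hab : a ≠ b
      · rw [destutter'_cons_pos _ hab, ih, if_pos hbc, if_pos hab]
      · rw [destutter'_cons_neg _ hab, if_neg hab]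
        simp only [ne_eq, not_not] at hab; subst hab
        rw [ih, if_pos hbc]
    · rw [destutter'_cons_neg _ hbc, ih]

/-- absorb destutter on the right of an append. -/
private lemma destutter'_append_destutter {α : Type*} [DecidableEq α] (l m : List α) (a : α) :
    destutter' (· ≠ ·) a (l ++ destutter (· ≠ ·) m)
      = destutter' (· ≠ ·) a (l ++ m) := by
  induction l generalizing a with
  | nil =>
    simp only [nil_append]
    cases m with
    | nil => rfl
    | cons b t => rw [destutter_cons', destutter'_destutter', destutter'_cons]; split <;> simp_all
  | cons b l ih =>
    simp only [cons_append]
    by_cases h : a ≠ b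
    · rw [destutter'_cons_pos _ h, destutter'_cons_pos _ h, ih]
    · rw [destutter'_cons_neg _ h, destutter'_cons_neg _ h, ih]

/-- absorb destutter on the left of an append (destutter' version). -/
private lemma destutter'_tail_append {α : Type*} [DecidableEq α] (l m : List α) (a : α) :
    destutter' (· ≠ ·) a ((destutter' (· ≠ ·) a l).tail ++ m)
      = destutter' (· ≠ ·) a (l ++ m) := by
  induction l generalizing a with
  | nil => rfl
  | cons b t ih =>
    simp only [cons_append]
    by_cases h : a ≠ b
    · rw [destutter'_cons_pos _ h, destutter'_cons_pos _ h]
      obtain ⟨s, hs⟩ := destutter'_head t b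
      rw [hs]
      simp only [tail_cons, cons_append]
      rw [destutter'_cons_pos _ h]
      congr 1
      have := ih (a := b)
      rw [hs] at this
      simpa using this
    · rw [destutter'_cons_neg _ h, destutter'_cons_neg _ h, ih]

/-- `uniq` (removal of adjacent duplicates, modeled as `List.destutter (· ≠ ·)`)
composed after uniq-aggregation is correct:
uniq (uniq l₁ ++ uniq l₂) = uniq (l₁ ++ l₂). -/
theorem uniq_aggregation_correct {α : Type*} [DecidableEq α] (l₁ l₂ : List α) :
    List.destutter (· ≠ ·) (List.destutter (· ≠ ·) l₁ ++ List.destutter (· ≠ ·) l₂)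
      = List.destutter (· ≠ ·) (l₁ ++ l₂) := by
  cases l₁ with
  | nil =>
    simp only [destutter_nil, nil_append]
    exact destutter_idem _ _
  | cons a t =>
    rw [destutter_cons']
    obtain ⟨s, hs⟩ := destutter'_head t a
    rw [hs]
    simp only [cons_append, destutter_cons']
    rw [destutter'_append_destutter]
    have := destutter'_tail_append t l₂ a
    rw [hs] at this
    simpa using this
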